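/- Let m ≥ 1 be an integer and c ∈ ℂ with c ≠ 0. For g := X₂³ + X₃⁵ + c·X₁^m ∈ MvPolynomial (Fin 3) ℂ (the blow-E₈ model of blow-order m), the Milnor algebra MvPolynomial (Fin 3) ℂ / J(g) is a ℂ-vector space of dimension 8·(m−1). -/

import Mathlib

/-!
The partial derivatives of `X₂³ + X₃⁵ + c·X₁^m` are nonzero constant multiples of the pure
powers `X₁^(m-1)`, `X₂²`, `X₃⁴`, so the Jacobian ideal is the monomial ideal they generate.
Modulo such an ideal the monomials `X^s` with `s < (m-1, 2, 4)` componentwise form a basis,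
giving dimension `(m-1)·2·4`.
-/

open MvPolynomial

/-- The Jacobian ideal of `g`, generated by its partial derivatives. -/
noncomputable def jacobianIdeal (g : MvPolynomial (Fin 3) ℂ) :
    Ideal (MvPolynomial (Fin 3) ℂ) :=
  Ideal.span (Set.range fun i : Fin 3 => pderiv i g)

namespace MvPolynomial

variable {σ R : Type*} [CommRing R]

lemma isCompl_restrictSupport_compl (s : Set (σ →₀ ℕ)) :
    IsCompl (restrictSupport R s) (restrictSupport R sᶜ) := by
  constructor
  · rw [Submodule.disjoint_def]
    intro p hs hsc
    rw [mem_restrictSupport_iff] at hs hsc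
    have hempty : (p.support : Set (σ →₀ ℕ)) = ∅ :=
      Set.subset_empty_iff.1 fun x hx => hsc hx (hs hx)
    simpa using hempty
  · rw [codisjoint_iff, restrictSupport_eq_span, restrictSupport_eq_span, ← Submodule.span_union,
      ← Set.image_union, Set.union_compl_self, ← restrictSupport_eq_span, restrictSupport_univ]

lemma restrictScalars_span_X_pow (d : σ → ℕ) :
    (Ideal.span (Set.range fun i => X i ^ d i)).restrictScalars R =
      restrictSupport R {s | ∃ i, d i ≤ s i} := by
  ext p
  have hmonomial : Set.range (fun i => (X i ^ d i : MvPolynomial σ R)) =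
      (monomial · 1) '' Set.range fun i => Finsupp.single i (d i) := by
    rw [← Set.range_comp]; simp [Function.comp_def, X_pow_eq_monomial]
  rw [Submodule.restrictScalars_mem, hmonomial, mem_ideal_span_monomial_image,
    mem_restrictSupport_iff]
  simp [Set.subset_def, Finsupp.single_le_iff]

noncomputable def setOfLtEquivPi [Finite σ] (d : σ → ℕ) :
    {s : σ →₀ ℕ | ∀ i, s i < d i} ≃ ∀ i, Fin (d i) :=
  (Finsupp.equivFunOnFinite.subtypeEquiv fun _ => Iff.rfl).trans <|
    Equiv.subtypePiEquivPi.trans (Equiv.piCongrRight fun _ => Fin.equivSubtype.symm)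

noncomputable def quotientSpanXPowEquiv (d : σ → ℕ) :
    (MvPolynomial σ R ⧸ Ideal.span (Set.range fun i => (X i ^ d i : MvPolynomial σ R)))
      ≃ₗ[R] restrictSupport R {s | ∀ i, s i < d i} := by
  refine (Submodule.Quotient.restrictScalarsEquiv R _).symm ≪≫ₗ
    Submodule.quotientEquivOfIsCompl _ _ ?_
  have hcompl : {s : σ →₀ ℕ | ∀ i, s i < d i}ᶜ = {s | ∃ i, d i ≤ s i} := by
    ext; simp
  rw [restrictScalars_span_X_pow, ← hcompl]
  exact (isCompl_restrictSupport_compl _).symm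

instance finite_quotient_span_X_pow [Finite σ] (d : σ → ℕ) :
    Module.Finite R
      (MvPolynomial σ R ⧸ Ideal.span (Set.range fun i => (X i ^ d i : MvPolynomial σ R))) :=
  have := Finite.of_equiv _ (setOfLtEquivPi d).symm
  have := Module.Finite.of_basis (basisRestrictSupport R {s : σ →₀ ℕ | ∀ i, s i < d i})
  Module.Finite.equiv (quotientSpanXPowEquiv d).symm

theorem finrank_quotient_span_X_pow [Fintype σ] [Nontrivial R] (d : σ → ℕ) :
    Module.finrank R
      (MvPolynomial σ R ⧸ Ideal.span (Set.range fun i => (X i ^ d i : MvPolynomial σ R))) =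
      ∏ i, d i := by
  rw [(quotientSpanXPowEquiv d).finrank_eq,
    Module.finrank_eq_nat_card_basis (basisRestrictSupport R _),
    Nat.card_congr (setOfLtEquivPi d), Nat.card_pi]
  simp

end MvPolynomial

theorem Ideal.span_range_mul_isUnit {R ι : Type*} [CommSemiring R] {u : ι → R}
    (hu : ∀ i, IsUnit (u i)) (f : ι → R) :
    Ideal.span (Set.range fun i => u i * f i) = Ideal.span (Set.range f) := by
  refine le_antisymm (Ideal.span_le.2 ?_) (Ideal.span_le.2 ?_) <;> rintro _ ⟨i, rfl⟩
  · exact Ideal.mul_mem_left _ _ (Ideal.subset_span ⟨i, rfl⟩)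
  · rw [← (hu i).unit.inv_mul_cancel_left (f i)]
    exact Ideal.mul_mem_left _ _ (Ideal.subset_span ⟨i, rfl⟩)

theorem pderiv_blowE8 {R : Type*} [CommSemiring R] (m : ℕ) (c : R) (i : Fin 3) :
    pderiv i (X 1 ^ 3 + X 2 ^ 5 + C c * X 0 ^ m : MvPolynomial (Fin 3) R) =
      C (![c * m, 3, 5] i) * X i ^ (![m - 1, 2, 4] i) := by
  fin_cases i
  · simp; ring
  · simp [map_ofNat C]
  · simp [map_ofNat C]

theorem jacobianIdeal_blowE8 {m : ℕ} (hm : 1 ≤ m) {c : ℂ} (hc : c ≠ 0) :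
    jacobianIdeal (X 1 ^ 3 + X 2 ^ 5 + C c * X 0 ^ m) =
      Ideal.span (Set.range fun i => X i ^ (![m - 1, 2, 4] i)) := by
  have hunit : ∀ i, IsUnit (C (![c * m, 3, 5] i) : MvPolynomial (Fin 3) ℂ) := by
    intro i
    refine (isUnit_iff_ne_zero.2 ?_).map C
    fin_cases i <;> simp [hc]; omega
  simp_rw [jacobianIdeal, pderiv_blowE8]
  exact Ideal.span_range_mul_isUnit hunit _

/-- The blow-`E₈` model `x₂³ + x₃⁵ + c·x₁^m` of blow-order `m` has Milnor
number `8·(m-1)`. -/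
theorem milnor_number_blow_E8 (m : ℕ) (hm : 1 ≤ m) (c : ℂ) (hc : c ≠ 0) :
    FiniteDimensional ℂ
      (MvPolynomial (Fin 3) ℂ ⧸ jacobianIdeal (X 1 ^ 3 + X 2 ^ 5 + C c * X 0 ^ m)) ∧
    Module.finrank ℂ
      (MvPolynomial (Fin 3) ℂ ⧸ jacobianIdeal (X 1 ^ 3 + X 2 ^ 5 + C c * X 0 ^ m)) =
      8 * (m - 1) := by
  rw [jacobianIdeal_blowE8 hm hc]
  refine ⟨inferInstance, ?_⟩
  simp [finrank_quotient_span_X_pow, Fin.prod_univ_three]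
  ring
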